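/- Let f, g : {-1,1}^n → ℝ with f ≠ g. Define I₀(f,g) = 2^{-n} · |{x ∈ {-1,1}^n : f(x) ≠ g(x)}| and D₀(f,g) = |{S ⊆ [n] : f̂(S) ≠ ĝ(S)}|. Then I₀(f,g) · D₀(f,g) ≥ 1. -/
import Mathlib


open scoped Classical

noncomputable section

/-- The real value `±1` encoded by a Boolean. -/
def toPM (b : Bool) : ℝ := if b then 1 else -1

/-- The Fourier character `χ_S(x) = ∏_{i ∈ S} x_i` on the Boolean cube `{-1,1}^n`. -/
def chi {n : ℕ} (S : Finset (Fin n)) (x : Fin n → Bool) : ℝ := ∏ i ∈ S, toPM (x i)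

/-- The inner product `⟨f,g⟩ = 2^{-n} ∑_{x ∈ {-1,1}^n} f(x) g(x)`. -/
def binner {n : ℕ} (f g : (Fin n → Bool) → ℝ) : ℝ := (∑ x, f x * g x) / 2 ^ n

/-- The Fourier coefficient `f̂(S) = ⟨f, χ_S⟩`. -/
def bFourier {n : ℕ} (f : (Fin n → Bool) → ℝ) (S : Finset (Fin n)) : ℝ :=
  binner f (chi S)

lemma toPM_mul_self (b : Bool) : toPM b * toPM b = 1 := by cases b <;> norm_num [toPM]

lemma abs_toPM (b : Bool) : |toPM b| = 1 := by cases b <;> norm_num [toPM]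

lemma chi_abs {n : ℕ} (S : Finset (Fin n)) (x : Fin n → Bool) : |chi S x| = 1 := by
  rw [chi, Finset.abs_prod]
  simp [abs_toPM]

lemma sum_chi_mul {n : ℕ} (x y : Fin n → Bool) :
    ∑ S : Finset (Fin n), chi S y * chi S x = if y = x then (2:ℝ)^n else 0 := by
  have h1 : ∀ S : Finset (Fin n), chi S y * chi S x
      = ∏ i ∈ S, (toPM (y i) * toPM (x i)) := by
    intro S; rw [chi, chi, Finset.prod_mul_distrib]
  simp_rw [h1]
  have h2 : ∏ i : Fin n, (toPM (y i) * toPM (x i) + 1)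
      = ∑ S : Finset (Fin n), ∏ i ∈ S, (toPM (y i) * toPM (x i)) := by
    rw [Finset.prod_add]
    rw [← Finset.powerset_univ]
    apply Finset.sum_congr rfl
    intro t ht
    simp
  rw [← h2]
  by_cases hxy : y = x
  · subst hxy
    simp only [toPM_mul_self, if_pos rfl]
    rw [Finset.prod_const]
    norm_num
  · rw [if_neg hxy]
    obtain ⟨i, hi⟩ := Function.ne_iff.mp hxy
    apply Finset.prod_eq_zero (Finset.mem_univ i)
    revert hi
    cases y i <;> cases x i <;> norm_num [toPM]
  
lemma inversion {n : ℕ} (h : (Fin n → Bool) → ℝ) (x : Fin n → Bool) :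
    h x = ∑ S : Finset (Fin n), bFourier h S * chi S x := by
  have h2 : (0:ℝ) < 2 ^ n := by positivity
  simp only [bFourier, binner, div_mul_eq_mul_div, Finset.sum_mul, mul_assoc]
  rw [← Finset.sum_div, Finset.sum_comm]
  rw [eq_div_iff (ne_of_gt h2)]
  have : ∀ y, ∑ S : Finset (Fin n), h y * (chi S y * chi S x)
      = h y * (if y = x then (2:ℝ)^n else 0) := by
    intro y
    rw [← Finset.mul_sum, sum_chi_mul]
  simp_rw [this]
  simp [Finset.sum_ite_eq, mul_comm]

/-- **Uncertainty principle for removal-based explanations**: for `f ≠ g`,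
the `L⁰` interpretation error times the `L⁰` spectrum distance is at least `1`. -/
theorem interpretation_spectrum_uncertainty {n : ℕ}
    (f g : (Fin n → Bool) → ℝ) (hfg : f ≠ g) :
    1 ≤ (({x : Fin n → Bool | f x ≠ g x}.ncard : ℝ) / 2 ^ n) *
        ({S : Finset (Fin n) | bFourier f S ≠ bFourier g S}.ncard : ℝ) := by
  set h : (Fin n → Bool) → ℝ := fun x => f x - g x with hh
  have h2 : (0:ℝ) < 2 ^ n := by positivity
  have hF : ∀ S, bFourier h S = bFourier f S - bFourier g S := by
    intro S
    simp only [bFourier, binner, hh, sub_mul, Finset.sum_sub_distrib, sub_div]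
  -- translate sets to finsets
  set A : Finset (Fin n → Bool) := Finset.univ.filter (fun x => h x ≠ 0) with hA
  set B : Finset (Finset (Fin n)) := Finset.univ.filter (fun S => bFourier h S ≠ 0) with hB
  have hAcard : ({x : Fin n → Bool | f x ≠ g x}.ncard : ℝ) = (A.card : ℝ) := by
    congr 1
    rw [Set.ncard_eq_toFinset_card']
    congr 1
    ext x
    simp [hA, hh, sub_ne_zero]
  have hBcard : ({S : Finset (Fin n) | bFourier f S ≠ bFourier g S}.ncard : ℝ) = (B.card : ℝ) := by
    congr 1
    rw [Set.ncard_eq_toFinset_card']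
    congr 1
    ext S
    simp [hB, hF, sub_ne_zero]
  rw [hAcard, hBcard]
  -- pick a maximizer of |h|
  obtain ⟨x₀, -, hx₀⟩ := Finset.exists_max_image (Finset.univ : Finset (Fin n → Bool))
    (fun x => |h x|) ⟨fun _ => true, Finset.mem_univ _⟩
  set M : ℝ := |h x₀| with hM
  have hMpos : 0 < M := by
    obtain ⟨x₁, hx₁⟩ := Function.ne_iff.mp hfg
    have : h x₁ ≠ 0 := sub_ne_zero.mpr hx₁
    have := hx₀ x₁ (Finset.mem_univ _)
    calc (0:ℝ) < |h x₁| := abs_pos.mpr ‹h x₁ ≠ 0›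
      _ ≤ M := this
  -- bound on Fourier coefficients
  have bound1 : ∀ S, |bFourier h S| ≤ (A.card : ℝ) * M / 2 ^ n := by
    intro S
    rw [bFourier, binner, abs_div, abs_of_pos h2]
    apply div_le_div_of_nonneg_right ?_ h2.le
    calc |∑ x, h x * chi S x| ≤ ∑ x, |h x * chi S x| := Finset.abs_sum_le_sum_abs _ _
      _ = ∑ x, |h x| := by simp [abs_mul, chi_abs]
      _ = ∑ x ∈ A, |h x| := by
          symm
          apply Finset.sum_subset (Finset.subset_univ _)
          intro x _ hx
          simp [hA] at hx
          simp [hx]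
      _ ≤ ∑ _x ∈ A, M := Finset.sum_le_sum (fun x _ => hx₀ x (Finset.mem_univ _))
      _ = (A.card : ℝ) * M := by rw [Finset.sum_const, nsmul_eq_mul]
  -- main bound
  have bound2 : M ≤ (B.card : ℝ) * ((A.card : ℝ) * M / 2 ^ n) := by
    calc M = |h x₀| := rfl
      _ = |∑ S : Finset (Fin n), bFourier h S * chi S x₀| := by rw [← inversion]
      _ ≤ ∑ S : Finset (Fin n), |bFourier h S * chi S x₀| := Finset.abs_sum_le_sum_abs _ _
      _ = ∑ S : Finset (Fin n), |bFourier h S| := by simp [abs_mul, chi_abs]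
      _ = ∑ S ∈ B, |bFourier h S| := by
          symm
          apply Finset.sum_subset (Finset.subset_univ _)
          intro S _ hS
          simp [hB] at hS
          simp [hS]
      _ ≤ ∑ _S ∈ B, ((A.card : ℝ) * M / 2 ^ n) := Finset.sum_le_sum (fun S _ => bound1 S)
      _ = (B.card : ℝ) * ((A.card : ℝ) * M / 2 ^ n) := by rw [Finset.sum_const, nsmul_eq_mul]
  have : M ≤ ((A.card : ℝ) / 2 ^ n * (B.card : ℝ)) * M := by
    calc M ≤ (B.card : ℝ) * ((A.card : ℝ) * M / 2 ^ n) := bound2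
      _ = ((A.card : ℝ) / 2 ^ n * (B.card : ℝ)) * M := by ring
  nlinarith [hMpos]

end
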